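/- For the vector field X associated to u̇ = -v + h, v̇ = u + h, ẇ = -w + h with h(u,v,w) = a₁u² - a₁v² + (1-2a₁)w² + (6a₁-5)uv + (3-4a₁)uw + vw, the polynomial F(u,v,w) = w + (a₁-1)(u-w)² + (1-2a₁)(u-w)(v-w) + (1-a₁)(v-w)² satisfies XF = -F. -/

import Mathlib

noncomputable def h5 (a₁ u v w : ℝ) : ℝ :=
  a₁*u^2 - a₁*v^2 + (1 - 2*a₁)*w^2 + (6*a₁ - 5)*u*v + (3 - 4*a₁)*u*w + v*w

noncomputable def F5 (a₁ u v w : ℝ) : ℝ :=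
  w + (a₁ - 1)*(u - w)^2 + (1 - 2*a₁)*(u - w)*(v - w) + (1 - a₁)*(v - w)^2

theorem hasDerivAt_F5_u (a₁ u v w : ℝ) :
    HasDerivAt (fun s => F5 a₁ s v w) (2*(a₁ - 1)*(u - w) + (1 - 2*a₁)*(v - w)) u := by
  have hs := (hasDerivAt_id u).sub_const w
  exact ((((hasDerivAt_const u w).add ((hs.pow 2).const_mul (a₁ - 1))).add
    ((hs.const_mul (1 - 2*a₁)).mul_const (v - w))).add
    (hasDerivAt_const u ((1 - a₁)*(v - w)^2))).congr_deriv (by simp only [id]; ring)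

theorem hasDerivAt_F5_v (a₁ u v w : ℝ) :
    HasDerivAt (fun s => F5 a₁ u s w) ((1 - 2*a₁)*(u - w) + 2*(1 - a₁)*(v - w)) v := by
  have hs := (hasDerivAt_id v).sub_const w
  exact ((((hasDerivAt_const v w).add (hasDerivAt_const v ((a₁ - 1)*(u - w)^2))).add
    (hs.const_mul ((1 - 2*a₁)*(u - w)))).add ((hs.pow 2).const_mul (1 - a₁))).congr_deriv
    (by simp only [id]; ring)

theorem hasDerivAt_F5_w (a₁ u v w : ℝ) :
    HasDerivAt (fun s => F5 a₁ u v s)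
      (1 - 2*(a₁ - 1)*(u - w) - (1 - 2*a₁)*(u + v - 2*w) - 2*(1 - a₁)*(v - w)) w := by
  have hu := (hasDerivAt_id w).const_sub u
  have hv := (hasDerivAt_id w).const_sub v
  exact ((((hasDerivAt_id w).add ((hu.pow 2).const_mul (a₁ - 1))).add
    ((hu.const_mul (1 - 2*a₁)).mul hv)).add ((hv.pow 2).const_mul (1 - a₁))).congr_deriv
    (by simp only [id]; ring)

/-- F = 0 is an invariant algebraic surface with cofactor -1. -/
theorem stmt_5 : ∀ a₁ u v w : ℝ,
    (-v + h5 a₁ u v w) * deriv (fun s => F5 a₁ s v w) u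
    + (u + h5 a₁ u v w) * deriv (fun s => F5 a₁ u s w) v
    + (-w + h5 a₁ u v w) * deriv (fun s => F5 a₁ u v s) w
    = -F5 a₁ u v w := by
  intro a₁ u v w
  rw [(hasDerivAt_F5_u a₁ u v w).deriv, (hasDerivAt_F5_v a₁ u v w).deriv,
    (hasDerivAt_F5_w a₁ u v w).deriv]
  unfold h5 F5
  ring
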